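/- arXiv:1907.04027 — 3 statements merged into one kernel-verified Lean document; each statement's English description precedes it below -/
import Mathlib

section
/- Fix data (y_1,x_1),...,(y_n,x_n) in R x R^d, tau > 0, and beta* in R^d supported on a set S with |S| = s >= 1. Let g in R^d be arbitrary, and set w* = grad L_hat_tau(beta*) - g and b = ||g||_2. Let lambda, r, kappa, eps_1 > 0 satisfy lambda >= b/sqrt(s), r > 2.5 * kappa^{-1} * sqrt(s) * lambda, and lambda >= 2*(||w*||_inf + eps_1). Assume the restricted strong convexity property: for every beta in beta* + B(r) inter C(6*sqrt(s)) with beta != beta*, <grad L_hat_tau(beta) - grad L_hat_tau(beta*), beta - beta*> >= kappa * ||beta - beta*||_2^2. Then every eps_1-optimal solution beta_tilde of min_beta { L_hat_tau(beta) + lambda*||beta||_1 } satisfies ||beta_tilde - beta*||_2 <= 2.5 * kappa^{-1} * sqrt(s) * lambda. -/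
/-! The gradient of the empirical Huber loss is monotone because `ℓ'_τ` is a clipped identity.
Testing the `ε₁`-optimality condition against `δ = β̃ - β*` and splitting the `ℓ¹` norm over `S`
and `Sᶜ` gives the basic inequality, which puts `δ` in the cone `C(6√s)` and bounds
`⟨∇L̂(β̃) - ∇L̂(β*), δ⟩` by `2.5 λ √s ‖δ‖₂`. If `‖δ‖₂` exceeded `2.5 κ⁻¹ √s λ`, shrinking `δ` into
`B(r)` would keep it in the cone, and monotonicity of the gradient along the segment would carry
the bound to the shrunken point, where it contradicts restricted strong convexity. -/

set_option autoImplicit false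

open MeasureTheory ProbabilityTheory Filter

noncomputable section

/-- The Huber loss with robustification parameter `τ`. -/
def huber (τ x : ℝ) : ℝ := if |x| ≤ τ then x ^ 2 / 2 else τ * |x| - τ ^ 2 / 2

/-- The derivative of the Huber loss. -/
def huberDeriv (τ x : ℝ) : ℝ := if |x| ≤ τ then x else τ * Real.sign x

/-- Empirical Huber loss `L̂_τ(β) = n⁻¹ ∑ᵢ ℓ_τ(yᵢ - ⟨xᵢ, β⟩)`. -/
def empLoss {n d : ℕ} (y : Fin n → ℝ) (X : Fin n → Fin d → ℝ) (τ : ℝ)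
    (β : Fin d → ℝ) : ℝ :=
  (n : ℝ)⁻¹ * ∑ i, huber τ (y i - ∑ j, X i j * β j)

/-- Gradient of the empirical Huber loss:
`∇L̂_τ(β) = -n⁻¹ ∑ᵢ ℓ'_τ(yᵢ - ⟨xᵢ, β⟩) xᵢ`. -/
def empGrad {n d : ℕ} (y : Fin n → ℝ) (X : Fin n → Fin d → ℝ) (τ : ℝ)
    (β : Fin d → ℝ) : Fin d → ℝ :=
  fun j => -(n : ℝ)⁻¹ * ∑ i, huberDeriv τ (y i - ∑ j', X i j' * β j') * X i j

/-- ℓ¹ norm on `Fin d → ℝ`. -/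
def norm1 {d : ℕ} (v : Fin d → ℝ) : ℝ := ∑ j, |v j|

/-- Euclidean (ℓ²) norm on `Fin d → ℝ`. -/
def norm2 {d : ℕ} (v : Fin d → ℝ) : ℝ := Real.sqrt (∑ j, v j ^ 2)

/-- Sup (ℓ^∞) norm on `Fin d → ℝ`. -/
def normInf {d : ℕ} (v : Fin d → ℝ) : ℝ := ⨆ j, |v j|

/-- The subdifferential of the ℓ¹ norm at `β`. -/
def l1Subdiff {d : ℕ} (β : Fin d → ℝ) : Set (Fin d → ℝ) :=
  {ξ | ∀ j, if β j = 0 then ξ j ∈ Set.Icc (-1 : ℝ) 1 else ξ j = Real.sign (β j)}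

/-- `β` is an `ε`-optimal solution of `min L̂_τ + ‖lam ∘ ·‖₁`:  the suboptimality
measure `ω_lam(β) = min_{ξ ∈ ∂‖β‖₁} ‖∇L̂_τ(β) + lam ∘ ξ‖_∞` is at most `ε`. -/
def IsEpsOptimal {n d : ℕ} (y : Fin n → ℝ) (X : Fin n → Fin d → ℝ) (τ : ℝ)
    (lam : Fin d → ℝ) (ε : ℝ) (β : Fin d → ℝ) : Prop :=
  ∃ ξ ∈ l1Subdiff β, normInf (fun j => empGrad y X τ β j + lam j * ξ j) ≤ ε

open Matrix

section Huber

variable {τ : ℝ}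

lemma huberDeriv_eq_max_min (hτ : 0 ≤ τ) (x : ℝ) : huberDeriv τ x = max (-τ) (min τ x) := by
  unfold huberDeriv
  split_ifs with h
  · rw [abs_le] at h
    rw [min_eq_right h.2, max_eq_right h.1]
  · rcases lt_abs.1 (not_le.1 h) with hx | hx
    · rw [Real.sign_of_pos (hτ.trans_lt hx), mul_one, min_eq_left hx.le,
        max_eq_right (by linarith)]
    · rw [Real.sign_of_neg (by linarith), min_eq_right (by linarith),
        max_eq_left (by linarith), mul_neg_one]

lemma huberDeriv_monotone (hτ : 0 ≤ τ) : Monotone (huberDeriv τ) := fun a b hab => by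
  simpa only [huberDeriv_eq_max_min hτ] using max_le_max le_rfl (min_le_min le_rfl hab)

variable {n d : ℕ} (y : Fin n → ℝ) (X : Matrix (Fin n) (Fin d) ℝ)

lemma empGrad_eq_smul_vecMul (β : Fin d → ℝ) :
    empGrad y X τ β = -(n : ℝ)⁻¹ • (huberDeriv τ ∘ (y - X *ᵥ β)) ᵥ* X :=
  rfl

lemma empGrad_sub_dotProduct_sub (a b : Fin d → ℝ) :
    (empGrad y X τ a - empGrad y X τ b) ⬝ᵥ (a - b) =
      (n : ℝ)⁻¹ * (huberDeriv τ ∘ (y - X *ᵥ b) - huberDeriv τ ∘ (y - X *ᵥ a)) ⬝ᵥ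
        ((y - X *ᵥ b) - (y - X *ᵥ a)) := by
  rw [empGrad_eq_smul_vecMul, empGrad_eq_smul_vecMul, ← smul_sub, ← sub_vecMul,
    smul_dotProduct, ← dotProduct_mulVec, mulVec_sub, smul_eq_mul, sub_sub_sub_cancel_left,
    ← neg_sub (huberDeriv τ ∘ (y - X *ᵥ b)), neg_dotProduct, neg_mul_neg]

lemma empGrad_monotone (hτ : 0 ≤ τ) (a b : Fin d → ℝ) :
    0 ≤ (empGrad y X τ a - empGrad y X τ b) ⬝ᵥ (a - b) := by
  rw [empGrad_sub_dotProduct_sub]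
  refine mul_nonneg (by positivity) (Finset.sum_nonneg fun i _ => ?_)
  exact (monovary_id_iff.2 (huberDeriv_monotone hτ)).sub_mul_sub_nonneg _ _

end Huber

lemma dotProduct_sub_le_of_monotone {ι : Type*} [Fintype ι] {F : (ι → ℝ) → ι → ℝ}
    (hF : ∀ a b, 0 ≤ (F a - F b) ⬝ᵥ (a - b)) (b δ : ι → ℝ) {t : ℝ} (ht : t < 1) :
    (F (b + t • δ) - F b) ⬝ᵥ δ ≤ (F (b + δ) - F b) ⬝ᵥ δ := by
  have h := hF (b + δ) (b + t • δ)
  rw [show b + δ - (b + t • δ) = (1 - t) • δ by module, dotProduct_smul, smul_eq_mul,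
    mul_nonneg_iff_of_pos_left (sub_pos.2 ht), sub_dotProduct] at h
  rw [sub_dotProduct, sub_dotProduct]
  linarith

section Norms

variable {d : ℕ}

lemma abs_le_normInf (v : Fin d → ℝ) (j : Fin d) : |v j| ≤ normInf v :=
  le_ciSup (f := fun j => |v j|) (Set.finite_range _).bddAbove j

lemma norm1_nonneg (v : Fin d → ℝ) : 0 ≤ norm1 v :=
  Finset.sum_nonneg fun _ _ => abs_nonneg _

lemma norm1_eq_sum_add_sum_compl (S : Finset (Fin d)) (v : Fin d → ℝ) :
    norm1 v = ∑ j ∈ S, |v j| + ∑ j ∈ Sᶜ, |v j| :=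
  (Finset.sum_add_sum_compl S _).symm

lemma norm1_smul (t : ℝ) (v : Fin d → ℝ) : norm1 (t • v) = |t| * norm1 v := by
  simp only [norm1, Pi.smul_apply, smul_eq_mul, abs_mul, Finset.mul_sum]

lemma norm2_smul (t : ℝ) (v : Fin d → ℝ) : norm2 (t • v) = |t| * norm2 v := by
  simp only [norm2, Pi.smul_apply, smul_eq_mul, mul_pow, ← Finset.mul_sum]
  rw [Real.sqrt_mul (sq_nonneg t), Real.sqrt_sq_eq_abs]

lemma abs_dotProduct_le_normInf_mul_norm1 (v w : Fin d → ℝ) :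
    |v ⬝ᵥ w| ≤ normInf v * norm1 w := by
  calc |v ⬝ᵥ w| ≤ ∑ j, |v j * w j| := Finset.abs_sum_le_sum_abs _ _
    _ ≤ ∑ j, normInf v * |w j| := Finset.sum_le_sum fun j _ => by
        rw [abs_mul]
        exact mul_le_mul_of_nonneg_right (abs_le_normInf v j) (abs_nonneg _)
    _ = normInf v * norm1 w := (Finset.mul_sum _ _ _).symm

lemma abs_dotProduct_le_norm2_mul_norm2 (v w : Fin d → ℝ) :
    |v ⬝ᵥ w| ≤ norm2 v * norm2 w := by
  rw [norm2, norm2, ← Real.sqrt_mul (Finset.sum_nonneg fun _ _ => sq_nonneg _)]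
  exact Real.abs_le_sqrt (Finset.sum_mul_sq_le_sq_mul_sq _ _ _)

lemma sum_abs_le_sqrt_card_mul_norm2 (S : Finset (Fin d)) (v : Fin d → ℝ) :
    ∑ j ∈ S, |v j| ≤ √S.card * norm2 v := by
  rw [norm2, ← Real.sqrt_mul (Nat.cast_nonneg _)]
  refine Real.le_sqrt_of_sq_le ((sq_sum_le_card_mul_sum_sq ..).trans ?_)
  simp only [sq_abs]
  exact mul_le_mul_of_nonneg_left
    (Finset.sum_le_sum_of_subset_of_nonneg (Finset.subset_univ S) fun _ _ _ => sq_nonneg _)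
    (Nat.cast_nonneg _)

end Norms

section L1Subdiff

variable {d : ℕ} {β ξ : Fin d → ℝ}

lemma abs_le_one_of_mem_l1Subdiff (hξ : ξ ∈ l1Subdiff β) (j : Fin d) : |ξ j| ≤ 1 := by
  have h := hξ j
  split_ifs at h with hβ
  · exact abs_le.2 h
  · rw [h]
    rcases lt_or_gt_of_ne hβ with hneg | hpos
    · simp [Real.sign_of_neg hneg]
    · simp [Real.sign_of_pos hpos]

lemma mul_eq_abs_of_mem_l1Subdiff (hξ : ξ ∈ l1Subdiff β) (j : Fin d) : ξ j * β j = |β j| := by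
  have h := hξ j
  split_ifs at h with hβ
  · simp [hβ]
  · rw [h]
    rcases lt_or_gt_of_ne hβ with hneg | hpos
    · rw [Real.sign_of_neg hneg, abs_of_neg hneg, neg_one_mul]
    · rw [Real.sign_of_pos hpos, abs_of_pos hpos, one_mul]

lemma sum_compl_sub_sum_le_dotProduct {S : Finset (Fin d)} {βs : Fin d → ℝ}
    (hsupp : ∀ j ∉ S, βs j = 0) (hξ : ξ ∈ l1Subdiff β) :
    ∑ j ∈ Sᶜ, |(β - βs) j| - ∑ j ∈ S, |(β - βs) j| ≤ ξ ⬝ᵥ (β - βs) := by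
  have hS : -∑ j ∈ S, |(β - βs) j| ≤ ∑ j ∈ S, ξ j * (β - βs) j := by
    rw [← Finset.sum_neg_distrib]
    refine Finset.sum_le_sum fun j _ => neg_le_of_abs_le ?_
    rw [abs_mul]
    exact mul_le_of_le_one_left (abs_nonneg _) (abs_le_one_of_mem_l1Subdiff hξ j)
  have hSc : ∑ j ∈ Sᶜ, ξ j * (β - βs) j = ∑ j ∈ Sᶜ, |(β - βs) j| :=
    Finset.sum_congr rfl fun j hj => by
      rw [Pi.sub_apply, hsupp j (Finset.mem_compl.1 hj), sub_zero,
        mul_eq_abs_of_mem_l1Subdiff hξ j]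
  rw [dotProduct, ← Finset.sum_add_sum_compl S]
  linarith

end L1Subdiff

section Estimation

variable {d : ℕ}

lemma basic_inequality {S : Finset (Fin d)} {βs βt ξ u v g : Fin d → ℝ} {lam ε : ℝ}
    (hsupp : ∀ j ∉ S, βs j = 0) (hξ : ξ ∈ l1Subdiff βt) (hlam : 0 ≤ lam)
    (hu : normInf (u + lam • ξ) ≤ ε) (hlamlarge : 2 * (normInf (v - g) + ε) ≤ lam)
    (hg : norm2 g ≤ lam * √S.card) :
    (u - v) ⬝ᵥ (βt - βs) + lam / 2 * ∑ j ∈ Sᶜ, |(βt - βs) j| ≤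
      3 * lam / 2 * ∑ j ∈ S, |(βt - βs) j| + lam * √S.card * norm2 (βt - βs) := by
  set δ := βt - βs
  have hopt : (u + lam • ξ) ⬝ᵥ δ ≤ ε * norm1 δ :=
    (le_abs_self _).trans <| (abs_dotProduct_le_normInf_mul_norm1 _ _).trans <|
      mul_le_mul_of_nonneg_right hu (norm1_nonneg δ)
  have hnoise : -(normInf (v - g) * norm1 δ) ≤ (v - g) ⬝ᵥ δ :=
    neg_le_of_abs_le (abs_dotProduct_le_normInf_mul_norm1 _ _)
  have hbias : -(lam * √S.card * norm2 δ) ≤ g ⬝ᵥ δ :=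
    neg_le_of_abs_le <| (abs_dotProduct_le_norm2_mul_norm2 g δ).trans <|
      mul_le_mul_of_nonneg_right hg (Real.sqrt_nonneg _)
  have hpenalty := mul_le_mul_of_nonneg_left (sum_compl_sub_sum_le_dotProduct hsupp hξ) hlam
  have hhalf : (normInf (v - g) + ε) * norm1 δ ≤ lam / 2 * norm1 δ :=
    mul_le_mul_of_nonneg_right (by linarith) (norm1_nonneg δ)
  have hsplit : u - v = (u + lam • ξ) - lam • ξ - (v - g) - g := by abel
  rw [norm1_eq_sum_add_sum_compl S] at hopt hnoise hhalf
  rw [hsplit, sub_dotProduct, sub_dotProduct, sub_dotProduct, smul_dotProduct, smul_eq_mul]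
  linarith

lemma norm2_le_of_restrictedStrongConvexity {F : (Fin d → ℝ) → Fin d → ℝ}
    (hF : ∀ a b, 0 ≤ (F a - F b) ⬝ᵥ (a - b)) {βs βt : Fin d → ℝ} {κ r M L : ℝ}
    (hκ : 0 < κ) (hM : 0 ≤ M) (hr : M / κ < r)
    (hRSC : ∀ β, β ≠ βs → norm2 (β - βs) ≤ r → norm1 (β - βs) ≤ L * norm2 (β - βs) →
      κ * norm2 (β - βs) ^ 2 ≤ (F β - F βs) ⬝ᵥ (β - βs))
    (hcone : norm1 (βt - βs) ≤ L * norm2 (βt - βs))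
    (hbound : (F βt - F βs) ⬝ᵥ (βt - βs) ≤ M * norm2 (βt - βs)) :
    norm2 (βt - βs) ≤ M / κ := by
  set δ := βt - βs
  by_contra! hlt
  obtain ⟨c, hMc, hc⟩ := exists_between (lt_min hr hlt)
  have hc0 : 0 < c := (div_nonneg hM hκ.le).trans_lt hMc
  have hcδ : c < norm2 δ := hc.trans_le (min_le_right _ _)
  have hδ0 : 0 < norm2 δ := hc0.trans hcδ
  set t := c / norm2 δ
  have ht0 : 0 < t := div_pos hc0 hδ0
  have htδ : t * norm2 δ = c := div_mul_cancel₀ _ hδ0.ne'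
  have hβ : βs + t • δ - βs = t • δ := add_sub_cancel_left _ _
  have hnorm : norm2 (t • δ) = c := by rw [norm2_smul, abs_of_pos ht0, htδ]
  have hne : βs + t • δ ≠ βs := fun h => hc0.ne' <| by
    rw [← hnorm, ← hβ, h, sub_self]
    simp [norm2]
  have hRSC' := hRSC (βs + t • δ) hne
    (by rw [hβ, hnorm]; exact (hc.trans_le (min_le_left _ _)).le)
    (by
      rw [hβ, norm1_smul, norm2_smul, abs_of_pos ht0, mul_left_comm]
      exact mul_le_mul_of_nonneg_left hcone ht0.le)
  rw [hβ, hnorm, dotProduct_smul, smul_eq_mul] at hRSC'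
  have hray := dotProduct_sub_le_of_monotone hF βs δ ((div_lt_one hδ0).2 hcδ)
  rw [add_sub_cancel] at hray
  have hκc : κ * c * c ≤ M * c := calc
    κ * c * c = κ * c ^ 2 := by ring
    _ ≤ t * ((F βt - F βs) ⬝ᵥ δ) := hRSC'.trans (mul_le_mul_of_nonneg_left hray ht0.le)
    _ ≤ t * (M * norm2 δ) := mul_le_mul_of_nonneg_left hbound ht0.le
    _ = M * c := by rw [← htδ]; ring
  rw [div_lt_iff₀ hκ] at hMc
  linarith [le_of_mul_le_mul_right hκc hc0]

end Estimation

theorem statement_1_general {n d : ℕ} (y : Fin n → ℝ) (X : Fin n → Fin d → ℝ)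
    (τ : ℝ) (hτ : 0 < τ)
    (βs : Fin d → ℝ) (S : Finset (Fin d)) (hsupp : ∀ j ∉ S, βs j = 0)
    (s : ℕ) (hcard : S.card = s) (hs : 1 ≤ s)
    (g : Fin d → ℝ)
    (lam r κ ε1 : ℝ) (hlam : 0 < lam) (hκ : 0 < κ)
    (hbias : norm2 g / Real.sqrt s ≤ lam)
    (hrlarge : 2.5 * κ⁻¹ * Real.sqrt s * lam < r)
    (hlamlarge : 2 * (normInf (fun j => empGrad y X τ βs j - g j) + ε1) ≤ lam)
    (hRSC : ∀ β : Fin d → ℝ, β ≠ βs →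
      norm2 (fun j => β j - βs j) ≤ r →
      norm1 (fun j => β j - βs j) ≤ 6 * Real.sqrt s * norm2 (fun j => β j - βs j) →
      κ * (norm2 (fun j => β j - βs j)) ^ 2 ≤
        ∑ j, (empGrad y X τ β j - empGrad y X τ βs j) * (β j - βs j))
    (βt : Fin d → ℝ) (hopt : IsEpsOptimal y X τ (fun _ => lam) ε1 βt) :
    norm2 (fun j => βt j - βs j) ≤ 2.5 * κ⁻¹ * Real.sqrt s * lam := by
  subst hcard
  obtain ⟨ξ, hξ, hopt⟩ := hopt
  have hg : norm2 g ≤ lam * √S.card :=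
    (div_le_iff₀ (Real.sqrt_pos.2 (by exact_mod_cast hs))).1 hbias
  have hbasic := basic_inequality hsupp hξ hlam.le hopt hlamlarge hg
  have hmono := empGrad_monotone y X hτ.le βt βs
  have hS := sum_abs_le_sqrt_card_mul_norm2 S (βt - βs)
  have hSc : 0 ≤ ∑ j ∈ Sᶜ, |(βt - βs) j| := Finset.sum_nonneg fun _ _ => abs_nonneg _
  have hcone : norm1 (βt - βs) ≤ 6 * √S.card * norm2 (βt - βs) := by
    rw [norm1_eq_sum_add_sum_compl S]
    nlinarith
  have hbound : (empGrad y X τ βt - empGrad y X τ βs) ⬝ᵥ (βt - βs) ≤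
      2.5 * lam * √S.card * norm2 (βt - βs) := by
    nlinarith
  calc norm2 (βt - βs) ≤ 2.5 * lam * √S.card / κ :=
        norm2_le_of_restrictedStrongConvexity (empGrad_monotone y X hτ.le) hκ (by positivity)
          (by convert hrlarge using 1; ring) hRSC hcone hbound
    _ = 2.5 * κ⁻¹ * √S.card * lam := by ring

/-- Proposition 2.1: deterministic error bound for any
`ε₁`-optimal solution of the ℓ¹-penalized empirical Huber loss, conditioned on
restricted strong convexity and a large enough regularization parameter. -/
theorem statement_1 {n d : ℕ} (y : Fin n → ℝ) (X : Fin n → Fin d → ℝ)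
    (τ : ℝ) (hτ : 0 < τ)
    (βs : Fin d → ℝ) (S : Finset (Fin d)) (hsupp : ∀ j ∉ S, βs j = 0)
    (s : ℕ) (hcard : S.card = s) (hs : 1 ≤ s)
    (g : Fin d → ℝ)
    (lam r κ ε1 : ℝ) (hlam : 0 < lam) (hr : 0 < r) (hκ : 0 < κ) (hε1 : 0 < ε1)
    (hbias : norm2 g / Real.sqrt s ≤ lam)
    (hrlarge : 2.5 * κ⁻¹ * Real.sqrt s * lam < r)
    (hlamlarge : 2 * (normInf (fun j => empGrad y X τ βs j - g j) + ε1) ≤ lam)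
    (hRSC : ∀ β : Fin d → ℝ, β ≠ βs →
      norm2 (fun j => β j - βs j) ≤ r →
      norm1 (fun j => β j - βs j) ≤ 6 * Real.sqrt s * norm2 (fun j => β j - βs j) →
      κ * (norm2 (fun j => β j - βs j)) ^ 2 ≤
        ∑ j, (empGrad y X τ β j - empGrad y X τ βs j) * (β j - βs j))
    (βt : Fin d → ℝ) (hopt : IsEpsOptimal y X τ (fun _ => lam) ε1 βt) :
    norm2 (fun j => βt j - βs j) ≤ 2.5 * κ⁻¹ * Real.sqrt s * lam :=
  statement_1_general y X τ hτ βs S hsupp s hcard hs g lam r κ ε1 hlam hκ hbias hrlarge hlamlarge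
    hRSC βt hopt
end
end

section
/- Fix data (y_i,x_i)_{i=1}^n in R x R^d and tau > 0. Let E be a subset of {1,...,d} and beta in R^d with beta_j = 0 for all j not in E. Let g in R^d be arbitrary; set w = grad L_hat_tau(beta) - g and b = ||g||_2. Let lambda in R^d have nonnegative entries, let eps > 0, and assume min_{j not in E} lambda_j > ||w||_inf + eps. Then every eps-optimal solution beta_tilde of min_{beta'} { L_hat_tau(beta') + ||lambda o beta'||_1 } satisfies ||(beta_tilde - beta)_{E^c}||_1 <= [ (||lambda||_inf + ||w||_inf + eps) * ||(beta_tilde - beta)_E||_1 + b * ||beta_tilde - beta||_2 ] / ( min_{j not in E} lambda_j - ||w||_inf - eps ), where v_E and v_{E^c} denote the restrictions of a vector v to coordinates in E and in its complement. -/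
set_option autoImplicit false

open MeasureTheory ProbabilityTheory Filter

noncomputable section

lemma huberDeriv_eq (τ : ℝ) (hτ : 0 < τ) (x : ℝ) :
    huberDeriv τ x = max (-τ) (min x τ) := by
  unfold huberDeriv
  rcases le_or_gt (|x|) τ with h | h
  · rw [if_pos h]
    rw [abs_le] at h
    rw [min_eq_left h.2, max_eq_right h.1]
  · rw [if_neg (not_le.mpr h)]
    rcases lt_or_ge x 0 with hx | hx
    · have hx' : x < -τ := by rw [abs_of_neg hx] at h; linarith
      rw [Real.sign_of_neg hx, min_eq_left (by linarith), max_eq_left (by linarith)]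
      ring
    · have hx' : τ < x := by rwa [abs_of_nonneg hx] at h
      rw [Real.sign_of_pos (by linarith : (0:ℝ) < x), min_eq_right (by linarith),
        max_eq_right (by linarith), mul_one]

lemma huberDeriv_mono (τ : ℝ) (hτ : 0 < τ) : Monotone (huberDeriv τ) := by
  intro a b hab
  rw [huberDeriv_eq τ hτ, huberDeriv_eq τ hτ]
  exact max_le_max le_rfl (min_le_min hab le_rfl)

lemma sign_mul_self' (x : ℝ) : Real.sign x * x = |x| := by
  rcases lt_trichotomy x 0 with h | h | h
  · rw [Real.sign_of_neg h, abs_of_neg h]; ring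
  · simp [h]
  · rw [Real.sign_of_pos h, abs_of_pos h]; ring

lemma abs_sign_le_one (x : ℝ) : |Real.sign x| ≤ 1 := by
  rcases lt_trichotomy x 0 with h | h | h
  · rw [Real.sign_of_neg h]; norm_num
  · simp [h]
  · rw [Real.sign_of_pos h]; norm_num

/-- Lemma A.2: cone-type bound for `ε`-optimal solutions of the
weighted ℓ¹-penalized empirical Huber loss. -/
theorem statement_10 {n d : ℕ} (y : Fin n → ℝ) (X : Fin n → Fin d → ℝ)
    (τ : ℝ) (hτ : 0 < τ)
    (E : Finset (Fin d)) (β : Fin d → ℝ) (hβ : ∀ j ∉ E, β j = 0)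
    (g : Fin d → ℝ) (lam : Fin d → ℝ) (hlam : ∀ j, 0 ≤ lam j)
    (ε : ℝ) (hε : 0 < ε)
    (hmin : normInf (fun k => empGrad y X τ β k - g k) + ε <
      ⨅ j : {j : Fin d // j ∉ E}, lam (j : Fin d))
    (βt : Fin d → ℝ) (hopt : IsEpsOptimal y X τ lam ε βt) :
    ∑ j ∈ Eᶜ, |βt j - β j| ≤
      ((normInf lam + normInf (fun k => empGrad y X τ β k - g k) + ε) *
          ∑ j ∈ E, |βt j - β j| +
        norm2 g * norm2 (fun j => βt j - β j)) /
      ((⨅ j : {j : Fin d // j ∉ E}, lam (j : Fin d)) -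
        normInf (fun k => empGrad y X τ β k - g k) - ε) := by
  classical
  obtain ⟨ξ, hξ, hsub⟩ := hopt
  simp only [l1Subdiff, Set.mem_setOf_eq] at hξ
  set w : Fin d → ℝ := fun k => empGrad y X τ β k - g k with hwdef
  set r : Fin d → ℝ := fun j => empGrad y X τ βt j + lam j * ξ j with hrdef
  set lmin : ℝ := ⨅ j : {j : Fin d // j ∉ E}, lam (j : Fin d) with hlmindef
  have hD : 0 < lmin - normInf w - ε := by linarith
  -- per-coordinate bounds
  have hrb : ∀ j, |r j| ≤ ε := by
    intro j
    have h1 : |r j| ≤ ⨆ k, |r k| :=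
      le_ciSup (f := fun k => |r k|) (Set.Finite.bddAbove (Set.finite_range _)) j
    have h2 : normInf r ≤ ε := hsub
    simp only [normInf] at h2
    linarith
  have hwb : ∀ j, |w j| ≤ normInf w := by
    intro j
    have h1 : |w j| ≤ ⨆ k, |w k| :=
      le_ciSup (f := fun k => |w k|) (Set.Finite.bddAbove (Set.finite_range _)) j
    simpa [normInf] using h1
  have hlb : ∀ j, lam j ≤ normInf lam := by
    intro j
    have h1 : |lam j| ≤ ⨆ k, |lam k| :=
      le_ciSup (f := fun k => |lam k|) (Set.Finite.bddAbove (Set.finite_range _)) j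
    rw [abs_of_nonneg (hlam j)] at h1
    simpa [normInf] using h1
  have hxib : ∀ j, |ξ j| ≤ 1 := by
    intro j
    have h := hξ j
    by_cases hb : βt j = 0
    · rw [if_pos hb] at h; exact abs_le.mpr ⟨h.1, h.2⟩
    · rw [if_neg hb] at h; rw [h]; exact abs_sign_le_one _
  have hlmin_le : ∀ j ∉ E, lmin ≤ lam j := by
    intro j hj
    rw [hlmindef]
    exact ciInf_le (f := fun j : {j : Fin d // j ∉ E} => lam (j : Fin d))
      (Set.Finite.bddBelow (Set.finite_range _)) ⟨j, hj⟩
  -- gradient monotonicity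
  have hmono : ∀ s t : ℝ, 0 ≤ (huberDeriv τ s - huberDeriv τ t) * (s - t) := by
    intro s t
    rcases le_total s t with h | h
    · nlinarith [huberDeriv_mono τ hτ h]
    · nlinarith [huberDeriv_mono τ hτ h]
  have hba : ∀ i, (y i - ∑ j', X i j' * β j') - (y i - ∑ j', X i j' * βt j')
      = ∑ j, X i j * (βt j - β j) := by
    intro i
    simp only [mul_sub, Finset.sum_sub_distrib]
    ring
  have h1 : ∀ j, (empGrad y X τ βt j - empGrad y X τ β j) * (βt j - β j)
      = ∑ i, (n:ℝ)⁻¹ * ((huberDeriv τ (y i - ∑ j', X i j' * β j')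
          - huberDeriv τ (y i - ∑ j', X i j' * βt j')) * (X i j * (βt j - β j))) := by
    intro j
    simp only [empGrad, sub_mul, ← mul_assoc, ← Finset.sum_mul, ← Finset.mul_sum,
      Finset.sum_sub_distrib]
    ring
  have hS : 0 ≤ ∑ j, (empGrad y X τ βt j - empGrad y X τ β j) * (βt j - β j) := by
    calc (0:ℝ) ≤ ∑ i, (n:ℝ)⁻¹ * ((huberDeriv τ (y i - ∑ j', X i j' * β j')
            - huberDeriv τ (y i - ∑ j', X i j' * βt j'))
            * ((y i - ∑ j', X i j' * β j') - (y i - ∑ j', X i j' * βt j'))) := by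
          apply Finset.sum_nonneg; intro i _
          exact mul_nonneg (by positivity) (hmono _ _)
      _ = ∑ i, ∑ j, (n:ℝ)⁻¹ * ((huberDeriv τ (y i - ∑ j', X i j' * β j')
            - huberDeriv τ (y i - ∑ j', X i j' * βt j')) * (X i j * (βt j - β j))) := by
          apply Finset.sum_congr rfl; intro i _
          rw [hba i, Finset.mul_sum, Finset.mul_sum]
      _ = ∑ j, ∑ i, (n:ℝ)⁻¹ * ((huberDeriv τ (y i - ∑ j', X i j' * β j')
            - huberDeriv τ (y i - ∑ j', X i j' * βt j')) * (X i j * (βt j - β j))) :=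
          Finset.sum_comm
      _ = ∑ j, (empGrad y X τ βt j - empGrad y X τ β j) * (βt j - β j) := by
          apply Finset.sum_congr rfl; intro j _
          exact (h1 j).symm
  -- decomposition
  have hid : ∑ j, (empGrad y X τ βt j - empGrad y X τ β j) * (βt j - β j)
      = ∑ j, r j * (βt j - β j) - ∑ j, lam j * ξ j * (βt j - β j)
        - ∑ j, g j * (βt j - β j) - ∑ j, w j * (βt j - β j) := by
    rw [← Finset.sum_sub_distrib, ← Finset.sum_sub_distrib, ← Finset.sum_sub_distrib]
    apply Finset.sum_congr rfl; intro j _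
    simp only [hrdef, hwdef]
    ring
  -- Cauchy-Schwarz
  have hcs : -∑ j, g j * (βt j - β j) ≤ norm2 g * norm2 (fun j => βt j - β j) := by
    have hcs1 : (∑ j, g j * (βt j - β j))^2 ≤ (∑ j, g j ^ 2) * ∑ j, (βt j - β j)^2 :=
      Finset.sum_mul_sq_le_sq_mul_sq _ _ _
    have h3 : |∑ j, g j * (βt j - β j)| = Real.sqrt ((∑ j, g j * (βt j - β j))^2) :=
      (Real.sqrt_sq_eq_abs _).symm
    have h4 : Real.sqrt ((∑ j, g j * (βt j - β j))^2)
        ≤ Real.sqrt ((∑ j, g j ^ 2) * ∑ j, (βt j - β j)^2) := Real.sqrt_le_sqrt hcs1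
    have h5 : Real.sqrt ((∑ j, g j ^ 2) * ∑ j, (βt j - β j)^2)
        = norm2 g * norm2 (fun j => βt j - β j) := by
      simp only [norm2]
      rw [← Real.sqrt_mul (Finset.sum_nonneg fun j _ => sq_nonneg _)]
    calc -∑ j, g j * (βt j - β j) ≤ |∑ j, g j * (βt j - β j)| := neg_le_abs _
      _ = Real.sqrt ((∑ j, g j * (βt j - β j))^2) := h3
      _ ≤ Real.sqrt ((∑ j, g j ^ 2) * ∑ j, (βt j - β j)^2) := h4
      _ = _ := h5
  -- bound on r-term
  have hA : ∑ j, r j * (βt j - β j) ≤ ε * ∑ j, |βt j - β j| := by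
    rw [Finset.mul_sum]
    apply Finset.sum_le_sum; intro j _
    calc r j * (βt j - β j) ≤ |r j * (βt j - β j)| := le_abs_self _
      _ = |r j| * |βt j - β j| := abs_mul _ _
      _ ≤ ε * |βt j - β j| := mul_le_mul_of_nonneg_right (hrb j) (abs_nonneg _)
  -- bound on w-term
  have hB : -∑ j, w j * (βt j - β j) ≤ normInf w * ∑ j, |βt j - β j| := by
    rw [Finset.mul_sum, ← Finset.sum_neg_distrib]
    apply Finset.sum_le_sum; intro j _
    calc -(w j * (βt j - β j)) ≤ |w j * (βt j - β j)| := neg_le_abs _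
      _ = |w j| * |βt j - β j| := abs_mul _ _
      _ ≤ normInf w * |βt j - β j| := mul_le_mul_of_nonneg_right (hwb j) (abs_nonneg _)
  -- lower bound on E-part
  have hE : -(normInf lam * ∑ j ∈ E, |βt j - β j|) ≤ ∑ j ∈ E, lam j * ξ j * (βt j - β j) := by
    rw [Finset.mul_sum, ← Finset.sum_neg_distrib]
    apply Finset.sum_le_sum; intro j _
    have habs : |lam j * ξ j * (βt j - β j)| ≤ normInf lam * |βt j - β j| := by
      rw [abs_mul, abs_mul, abs_of_nonneg (hlam j)]
      calc lam j * |ξ j| * |βt j - β j| ≤ lam j * |βt j - β j| :=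
          mul_le_mul_of_nonneg_right (mul_le_of_le_one_right (hlam j) (hxib j)) (abs_nonneg _)
        _ ≤ normInf lam * |βt j - β j| :=
          mul_le_mul_of_nonneg_right (hlb j) (abs_nonneg _)
    have := neg_abs_le (lam j * ξ j * (βt j - β j))
    linarith
  -- lower bound on Eᶜ-part
  have hEc : lmin * ∑ j ∈ Eᶜ, |βt j - β j| ≤ ∑ j ∈ Eᶜ, lam j * ξ j * (βt j - β j) := by
    rw [Finset.mul_sum]
    apply Finset.sum_le_sum; intro j hj
    have hjE : j ∉ E := Finset.mem_compl.mp hj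
    have hb0 : β j = 0 := hβ j hjE
    rw [hb0, sub_zero]
    have hsgn : ξ j * βt j = |βt j| := by
      by_cases hbt : βt j = 0
      · simp [hbt]
      · have h := hξ j
        rw [if_neg hbt] at h
        rw [h, sign_mul_self']
    rw [mul_assoc, hsgn]
    exact mul_le_mul_of_nonneg_right (hlmin_le j hjE) (abs_nonneg _)
  -- sum splits
  have hsplit1 : ∑ j ∈ E, lam j * ξ j * (βt j - β j) + ∑ j ∈ Eᶜ, lam j * ξ j * (βt j - β j)
      = ∑ j, lam j * ξ j * (βt j - β j) := Finset.sum_add_sum_compl E _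
  have hsplit2 : ∑ j ∈ E, |βt j - β j| + ∑ j ∈ Eᶜ, |βt j - β j|
      = ∑ j, |βt j - β j| := Finset.sum_add_sum_compl E _
  -- combine
  have hfinal : (lmin - normInf w - ε) * ∑ j ∈ Eᶜ, |βt j - β j|
      ≤ (normInf lam + normInf w + ε) * ∑ j ∈ E, |βt j - β j|
        + norm2 g * norm2 (fun j => βt j - β j) := by
    have H := hS
    rw [hid] at H
    rw [← hsplit2] at hA hB
    rw [← hsplit1] at H
    linarith [hA, hB, hcs, hE, hEc]
  rw [le_div_iff₀ hD]
  linarith [hfinal]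
end
end

section
/- Fix data (y_i,x_i)_{i=1}^n and tau > 0. Let lambda in R^d have nonnegative entries, let phi > 0 and beta_prev in R^d, and let beta_new be a minimizer over R^d of beta |-> F(beta; phi, beta_prev) + ||lambda o beta||_1, where F(beta; phi, beta') = L_hat_tau(beta') + <grad L_hat_tau(beta'), beta - beta'> + (phi/2)*||beta - beta'||_2^2. Assume the local majorization F(beta_new; phi, beta_prev) >= L_hat_tau(beta_new). Then, with Psi(beta) := L_hat_tau(beta) + ||lambda o beta||_1, for every beta in R^d: Psi(beta) - Psi(beta_new) >= (phi/2)*( ||beta - beta_new||_2^2 - ||beta - beta_prev||_2^2 ). -/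
/-!
The surrogate `β ↦ F(β; φ, β_prev) + ‖λ ∘ β‖₁` is the sum of a convex function and the
quadratic `(φ/2)‖β - β_prev‖²`, so its minimizer `β_new` satisfies
`F(β) + ‖λ ∘ β‖₁ ≥ F(β_new) + ‖λ ∘ β_new‖₁ + (φ/2)‖β - β_new‖²` for every `β`.
Convexity of the Huber loss gives `L̂_τ(β) ≥ L̂_τ(β_prev) + ⟨∇L̂_τ(β_prev), β - β_prev⟩`,
i.e. `F(β) ≤ L̂_τ(β) + (φ/2)‖β - β_prev‖²`, and the majorization hypothesis gives
`F(β_new) ≥ L̂_τ(β_new)`; the three inequalities add up to the claim.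
-/

set_option autoImplicit false

open MeasureTheory ProbabilityTheory Filter

noncomputable section

/-- The isotropic quadratic majorant
`F(β; φ, β') = L̂_τ(β') + ⟨∇L̂_τ(β'), β - β'⟩ + (φ/2)‖β - β'‖₂²`. -/
def Fmaj {n d : ℕ} (y : Fin n → ℝ) (X : Fin n → Fin d → ℝ) (τ φ : ℝ)
    (βp β : Fin d → ℝ) : ℝ :=
  empLoss y X τ βp + (∑ j, empGrad y X τ βp j * (β j - βp j)) +
    φ / 2 * (norm2 (fun j => β j - βp j)) ^ 2

lemma Real.sign_mul_self_eq_abs (r : ℝ) : Real.sign r * r = |r| := by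
  rcases lt_trichotomy r 0 with h | rfl | h
  · rw [Real.sign_of_neg h, abs_of_neg h]; ring
  · simp
  · rw [Real.sign_of_pos h, abs_of_pos h]; ring

lemma Real.sign_mul_le_abs (r a : ℝ) : Real.sign r * a ≤ |a| := by
  rcases Real.sign_apply_eq r with h | h | h <;> rw [h]
  · linarith [neg_abs_le a]
  · simp
  · linarith [le_abs_self a]

lemma huber_add_huberDeriv_mul_sub_le {τ : ℝ} (hτ : 0 ≤ τ) (a b : ℝ) :
    huber τ b + huberDeriv τ b * (a - b) ≤ huber τ a := by
  have hsb := Real.sign_mul_self_eq_abs b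
  have hsa := Real.sign_mul_le_abs b a
  unfold huber huberDeriv
  split_ifs with hb ha ha
  · nlinarith [sq_nonneg (a - b)]
  · -- `(|b| - τ) * (|a| - (|b| + τ) / 2) ≤ 0` since `|b| ≤ τ < |a|`
    have hab : b * a ≤ |b| * |a| := by rw [← abs_mul]; exact le_abs_self _
    nlinarith [sq_abs b, mul_nonneg (sub_nonneg.2 hb) (by linarith : (0:ℝ) ≤ |a| - (|b| + τ) / 2)]
  · nlinarith [sq_abs a, sq_nonneg (|a| - τ)]
  · nlinarith

section EmpiricalLoss

variable {n d : ℕ} (y : Fin n → ℝ) (X : Fin n → Fin d → ℝ) {τ : ℝ}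

lemma sum_empGrad_mul (β v : Fin d → ℝ) :
    ∑ j, empGrad y X τ β j * v j =
      -(n : ℝ)⁻¹ * ∑ i, huberDeriv τ (y i - ∑ j, X i j * β j) * ∑ j, X i j * v j := by
  simp only [empGrad, Finset.mul_sum, Finset.sum_mul]
  rw [Finset.sum_comm]
  exact Finset.sum_congr rfl fun i _ => Finset.sum_congr rfl fun j _ => by ring

lemma empLoss_add_sum_empGrad_mul_sub_le (hτ : 0 ≤ τ) (β₀ β : Fin d → ℝ) :
    empLoss y X τ β₀ + ∑ j, empGrad y X τ β₀ j * (β j - β₀ j) ≤ empLoss y X τ β := by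
  have hres : ∀ i, ∑ j, X i j * (β j - β₀ j) =
      -((y i - ∑ j, X i j * β j) - (y i - ∑ j, X i j * β₀ j)) := fun i => by
    simp only [mul_sub, Finset.sum_sub_distrib]; ring
  simp only [sum_empGrad_mul, hres, empLoss]
  rw [neg_mul, ← mul_neg, ← mul_add, ← Finset.sum_neg_distrib, ← Finset.sum_add_distrib]
  gcongr with i
  linear_combination
    huber_add_huberDeriv_mul_sub_le hτ (y i - ∑ j, X i j * β j) (y i - ∑ j, X i j * β₀ j)

lemma norm2_sq (v : Fin d → ℝ) : norm2 v ^ 2 = ∑ j, v j ^ 2 :=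
  Real.sq_sqrt (by positivity)

lemma Fmaj_add_weighted_l1_segment_le {φ : ℝ} {lam : Fin d → ℝ} (hlam : ∀ j, 0 ≤ lam j)
    (βp β₀ β₁ : Fin d → ℝ) {t : ℝ} (ht₀ : 0 ≤ t) (ht₁ : t ≤ 1) :
    Fmaj y X τ φ βp (β₀ + t • (β₁ - β₀)) + ∑ j, lam j * |(β₀ + t • (β₁ - β₀)) j| ≤
      (1 - t) * (Fmaj y X τ φ βp β₀ + ∑ j, lam j * |β₀ j|) +
        t * (Fmaj y X τ φ βp β₁ + ∑ j, lam j * |β₁ j|) -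
        t * (1 - t) * (φ / 2 * norm2 (fun j => β₁ j - β₀ j) ^ 2) := by
  have habs : ∀ j, lam j * |β₀ j + t * (β₁ j - β₀ j)| ≤
      (1 - t) * (lam j * |β₀ j|) + t * (lam j * |β₁ j|) := fun j => by
    rw [show β₀ j + t * (β₁ j - β₀ j) = (1 - t) * β₀ j + t * β₁ j by ring]
    have : |(1 - t) * β₀ j + t * β₁ j| ≤ (1 - t) * |β₀ j| + t * |β₁ j| := by
      calc _ ≤ |(1 - t) * β₀ j| + |t * β₁ j| := abs_add_le _ _
        _ = _ := by rw [abs_mul, abs_mul, abs_of_nonneg (by linarith), abs_of_nonneg ht₀]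
    nlinarith [hlam j]
  have hl1 := Finset.sum_le_sum fun j (_ : j ∈ Finset.univ) => habs j
  simp only [Finset.sum_add_distrib, ← Finset.mul_sum] at hl1
  have hlin : ∑ j, empGrad y X τ βp j * (β₀ j + t * (β₁ j - β₀ j) - βp j) =
      (1 - t) * ∑ j, empGrad y X τ βp j * (β₀ j - βp j) +
        t * ∑ j, empGrad y X τ βp j * (β₁ j - βp j) := by
    simp only [Finset.mul_sum, ← Finset.sum_add_distrib]
    exact Finset.sum_congr rfl fun j _ => by ring
  have hquad : ∑ j, (β₀ j + t * (β₁ j - β₀ j) - βp j) ^ 2 =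
      (1 - t) * ∑ j, (β₀ j - βp j) ^ 2 + t * ∑ j, (β₁ j - βp j) ^ 2 -
        t * (1 - t) * ∑ j, (β₁ j - β₀ j) ^ 2 := by
    simp only [Finset.mul_sum, ← Finset.sum_add_distrib, ← Finset.sum_sub_distrib]
    exact Finset.sum_congr rfl fun j _ => by ring
  simp only [Fmaj, norm2_sq, Pi.add_apply, Pi.smul_apply, Pi.sub_apply, smul_eq_mul]
  rw [hlin, hquad]
  linarith

end EmpiricalLoss

lemma le_of_forall_one_sub_mul_le {c D : ℝ} (h : ∀ t ∈ Set.Ioo (0 : ℝ) 1, (1 - t) * c ≤ D) :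
    c ≤ D := by
  have hlim : Tendsto (fun t : ℝ => (1 - t) * c) (nhdsWithin 0 (Set.Ioi 0)) (nhds c) := by
    have : Continuous fun t : ℝ => (1 - t) * c := by fun_prop
    simpa using (this.tendsto 0).mono_left nhdsWithin_le_nhds
  exact le_of_tendsto hlim (eventually_of_mem (Ioo_mem_nhdsGT one_pos) h)

/-- Compare `G x ≤ G (x + t • (y - x))` with the segment bound and let `t → 0`. -/
lemma le_sub_of_forall_le_of_segment_le {E : Type*} [AddCommGroup E] [Module ℝ E]
    {G : E → ℝ} {x y : E} {c : ℝ} (hmin : ∀ z, G x ≤ G z)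
    (hseg : ∀ t ∈ Set.Ioo (0 : ℝ) 1,
      G (x + t • (y - x)) ≤ (1 - t) * G x + t * G y - t * (1 - t) * c) :
    c ≤ G y - G x := by
  refine le_of_forall_one_sub_mul_le fun t ht => le_of_mul_le_mul_left ?_ ht.1
  nlinarith [hmin (x + t • (y - x)), hseg t ht]

theorem statement_13_general {n d : ℕ} (y : Fin n → ℝ) (X : Fin n → Fin d → ℝ)
    (τ : ℝ) (hτ : 0 < τ)
    (lam : Fin d → ℝ) (hlam : ∀ j, 0 ≤ lam j)
    (φ : ℝ) (βprev βnew : Fin d → ℝ)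
    (hmin : ∀ β : Fin d → ℝ,
      Fmaj y X τ φ βprev βnew + ∑ j, lam j * |βnew j| ≤
        Fmaj y X τ φ βprev β + ∑ j, lam j * |β j|)
    (hmaj : empLoss y X τ βnew ≤ Fmaj y X τ φ βprev βnew) :
    ∀ β : Fin d → ℝ,
      φ / 2 * ((norm2 (fun j => β j - βnew j)) ^ 2 -
          (norm2 (fun j => β j - βprev j)) ^ 2) ≤
        (empLoss y X τ β + ∑ j, lam j * |β j|) -
          (empLoss y X τ βnew + ∑ j, lam j * |βnew j|) := by
  intro β
  have hstrong := le_sub_of_forall_le_of_segment_le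
    (G := fun b => Fmaj y X τ φ βprev b + ∑ j, lam j * |b j|) hmin
    fun t ht => Fmaj_add_weighted_l1_segment_le y X hlam βprev βnew β ht.1.le ht.2.le
  have htangent := empLoss_add_sum_empGrad_mul_sub_le y X hτ.le βprev β
  simp only [Fmaj] at hstrong hmaj
  linarith

/-- Lemma C.2: one LAMM step decreases the penalized objective
`Ψ` in the stated quantitative sense. -/
theorem statement_13 {n d : ℕ} (y : Fin n → ℝ) (X : Fin n → Fin d → ℝ)
    (τ : ℝ) (hτ : 0 < τ)
    (lam : Fin d → ℝ) (hlam : ∀ j, 0 ≤ lam j)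
    (φ : ℝ) (hφ : 0 < φ) (βprev βnew : Fin d → ℝ)
    (hmin : ∀ β : Fin d → ℝ,
      Fmaj y X τ φ βprev βnew + ∑ j, lam j * |βnew j| ≤
        Fmaj y X τ φ βprev β + ∑ j, lam j * |β j|)
    (hmaj : empLoss y X τ βnew ≤ Fmaj y X τ φ βprev βnew) :
    ∀ β : Fin d → ℝ,
      φ / 2 * ((norm2 (fun j => β j - βnew j)) ^ 2 -
          (norm2 (fun j => β j - βprev j)) ^ 2) ≤
        (empLoss y X τ β + ∑ j, lam j * |β j|) -
          (empLoss y X τ βnew + ∑ j, lam j * |βnew j|) :=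
  statement_13_general y X τ hτ lam hlam φ βprev βnew hmin hmaj
end
end
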